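/- Fix integers t ≥ 1 and 2 ≤ q_1 < q_2, and let (x_1,…,x_t,y_1,…,y_t) ∼ D_SO. Then: (1) each x_i is uniform on [q_1] and each y_j is uniform on [q_2]; (2) for each j, y_j is independent of the joint vector (x_1,…,x_t); (3) for every σ ∈ S_t, E[1_σ(x_1,…,x_t)] = E[1_σ(y_1,…,y_t)] = 1/t!, where 1_σ is evaluated via its extension to ℤ^t; (4) E[SO_{2t}(x_1,…,x_t,y_1,…,y_t)] ≥ 1 − t²/(2q_1) − q_1/q_2, where SO_{2t} is evaluated via its extension to ℤ^{2t}. -/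

import Mathlib

/-!
`D_SO` is the push-forward of the uniform distribution on seeds `(x, z) ∈ [q₁]^t × [q₂]` under
`(x, z) ↦ (x, (x + z) mod q₂)`, which is injective as soon as `t ≥ 1`; so every expectation
under `D_SO` is an average over seeds. For fixed `x`, `z ↦ (x_j + z) mod q₂` permutes `[q₂]`,
which makes `y_j` uniform and independent of `x`. Precomposing with a permutation `τ` of the
coordinates preserves the uniform distribution on `[q₁]^t` and sends rank permutation `σ` to
`σ τ⁻¹`, so all `t!` relative orders are equally likely, for `x` and, for each fixed `z`,
for `y`.
Finally, `y = x + z` has the same order as `x` whenever `x` has no collision (probability at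
least `1 - C(t,2)/q₁` by a union bound over pairs) and `z < q₂ - q₁` (no wrap-around,
probability at least `1 - q₁/q₂`).
-/

open Classical Finset

noncomputable section
namespace OCSPPaper

/-- A permutation `σ` is compatible with the tuple `a` if `σ i < σ j` whenever `a i < a j`. -/
def compatiblePerm {m : ℕ} (a : Fin m → ℤ) (σ : Equiv.Perm (Fin m)) : Prop :=
  ∀ i j : Fin m, a i < a j → σ i < σ j

/-- The extension of an ordering predicate `P ⊆ S_m` to arbitrary integer tuples:
the fraction of compatible permutations that belong to `P`. -/
noncomputable def extPred {m : ℕ} (P : Finset (Equiv.Perm (Fin m))) (a : Fin m → ℤ) : ℝ :=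
  ((Finset.univ.filter fun σ => compatiblePerm a σ ∧ σ ∈ P).card : ℝ) /
    ((Finset.univ.filter fun σ => compatiblePerm a σ).card : ℝ)

/-- The Same-Order predicate `SO_{2t} ⊆ S_{2t}`: the relative order of the first `t` entries
coincides with the relative order of the last `t` entries. -/
def soPred (t : ℕ) : Finset (Equiv.Perm (Fin (t + t))) :=
  Finset.univ.filter fun σ => ∀ i j : Fin t,
    σ (Fin.castAdd t i) < σ (Fin.castAdd t j) ↔ σ (Fin.natAdd t i) < σ (Fin.natAdd t j)

/-- Density of the distribution `D_SO` on `ℤ^t × ℤ^t`: `x₁,…,x_t` independent uniform on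
`[q₁]`, `z` uniform on `[q₂]`, and `y_j = x_j + z mod q₂`. -/
noncomputable def dSO (t q1 q2 : ℕ) : (Fin t → ℤ) × (Fin t → ℤ) → ℝ := fun p =>
  if (∀ i, 0 ≤ p.1 i ∧ p.1 i < (q1 : ℤ)) ∧
      (∃ z : ℤ, 0 ≤ z ∧ z < (q2 : ℤ) ∧ ∀ j, p.2 j = (p.1 j + z) % (q2 : ℤ))
  then 1 / ((q1 : ℝ) ^ t * q2) else 0

open Function

section Extension

variable {m : ℕ}

lemma exists_compatiblePerm (a : Fin m → ℤ) : ∃ σ, compatiblePerm a σ := by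
  refine ⟨(Tuple.sort a)⁻¹, fun i j hij => ?_⟩
  by_contra h
  rcases (not_lt.1 h).lt_or_eq with h' | h'
  · have := Tuple.monotone_sort a h'.le
    simp only [Function.comp_apply, Equiv.Perm.coe_inv, Equiv.apply_symm_apply] at this
    exact this.not_gt hij
  · obtain rfl : i = j := by simpa using congrArg (Tuple.sort a) h'.symm
    exact lt_irrefl _ hij

lemma card_compatiblePerm_pos (a : Fin m → ℤ) : 0 < #{σ | compatiblePerm a σ} :=
  let ⟨σ, hσ⟩ := exists_compatiblePerm a
  card_pos.2 ⟨σ, by simpa using hσ⟩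

lemma compatiblePerm.lt_iff {a : Fin m → ℤ} {ρ : Equiv.Perm (Fin m)} (h : compatiblePerm a ρ)
    {k l : Fin m} (hkl : a k = a l → k = l) : ρ k < ρ l ↔ a k < a l := by
  refine ⟨fun hρ => ?_, h k l⟩
  rcases lt_trichotomy (a k) (a l) with hlt | heq | hgt
  · exact hlt
  · exact absurd hρ (by rw [hkl heq]; exact lt_irrefl _)
  · exact absurd (h l k hgt) hρ.not_gt

lemma compatiblePerm_comp_iff (a : Fin m → ℤ) (τ ρ : Equiv.Perm (Fin m)) :
    compatiblePerm (a ∘ τ) ρ ↔ compatiblePerm a (ρ * τ⁻¹) :=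
  ⟨fun h i j hij => by simpa using h (τ⁻¹ i) (τ⁻¹ j) (by simpa using hij),
    fun h i j hij => by simpa using h (τ i) (τ j) hij⟩

lemma extPred_nonneg (P : Finset (Equiv.Perm (Fin m))) (a : Fin m → ℤ) : 0 ≤ extPred P a := by
  unfold extPred
  positivity

lemma extPred_eq_one {P : Finset (Equiv.Perm (Fin m))} {a : Fin m → ℤ}
    (h : ∀ ρ, compatiblePerm a ρ → ρ ∈ P) : extPred P a = 1 := by
  rw [extPred, filter_congr fun ρ _ => and_iff_left_of_imp (h ρ),
    div_self (Nat.cast_ne_zero.2 (card_compatiblePerm_pos a).ne')]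

lemma sum_extPred_singleton (a : Fin m → ℤ) : ∑ σ, extPred {σ} a = 1 := by
  have hnum : ∑ σ : Equiv.Perm (Fin m), #{ρ | compatiblePerm a ρ ∧ ρ ∈ ({σ} : Finset _)} =
      #{ρ | compatiblePerm a ρ} := by
    simp only [card_filter, mem_singleton]
    rw [sum_comm]
    simp [ite_and]
  simp only [extPred, ← sum_div, ← Nat.cast_sum, hnum]
  exact div_self (Nat.cast_ne_zero.2 (card_compatiblePerm_pos a).ne')

lemma extPred_singleton_comp (a : Fin m → ℤ) (σ τ : Equiv.Perm (Fin m)) :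
    extPred {σ} (a ∘ τ) = extPred {σ * τ⁻¹} a := by
  unfold extPred
  congr 2 <;> refine card_equiv (Equiv.mulRight τ⁻¹) fun ρ => ?_
  · simp [compatiblePerm_comp_iff]
  · simp [compatiblePerm_comp_iff]

lemma sum_extPred_singleton_comp {α : Type*} {S : Finset (Fin m → α)}
    (hS : ∀ τ : Equiv.Perm (Fin m), ∀ x ∈ S, x ∘ τ ∈ S) (e : α → ℤ) (σ : Equiv.Perm (Fin m)) :
    ∑ x ∈ S, extPred {σ} (e ∘ x) = #S / m.factorial := by
  set F : Equiv.Perm (Fin m) → ℝ := fun ρ => ∑ x ∈ S, extPred {ρ} (e ∘ x)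
  -- reindexing `S` by `x ↦ x ∘ τ` turns `F ρ` into `F (ρ * τ⁻¹)`
  have hF : ∀ ρ τ, F ρ = F (ρ * τ⁻¹) := fun ρ τ => by
    calc F ρ = ∑ x ∈ S, extPred {ρ} (e ∘ (x ∘ τ)) :=
          sum_nbij' (fun x => x ∘ ⇑τ⁻¹) (fun x => x ∘ ⇑τ) (hS τ⁻¹) (hS τ)
            (fun x _ => by ext; simp) (fun x _ => by ext; simp) fun x _ => by simp [comp_assoc]
      _ = F (ρ * τ⁻¹) := sum_congr rfl fun x _ => extPred_singleton_comp (e ∘ x) ρ τ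
  have hconst : ∀ ρ, F ρ = F 1 := fun ρ => by simpa using hF ρ ρ
  have hsum : (m.factorial : ℝ) * F 1 = #S := by
    calc (m.factorial : ℝ) * F 1 = ∑ ρ, F ρ := by simp [hconst, Fintype.card_perm]
      _ = #S := by rw [sum_comm]; simp [sum_extPred_singleton]
  change F σ = _
  rw [hconst σ, ← hsum]
  field_simp

lemma extPred_soPred_append {a b : Fin m → ℤ} (ha : Injective a)
    (hab : ∀ i j, a i < a j ↔ b i < b j) : extPred (soPred m) (Fin.append a b) = 1 := by
  have hb : Injective b := fun i j hij => ha <| le_antisymm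
    (not_lt.1 fun h => ((hab j i).1 h).ne' hij) (not_lt.1 fun h => ((hab i j).1 h).ne hij)
  refine extPred_eq_one fun ρ hρ => ?_
  simp only [soPred, mem_filter, mem_univ, true_and]
  intro i j
  rw [hρ.lt_iff (by simpa only [Fin.append_left, Fin.castAdd_inj] using @ha i j),
    hρ.lt_iff (by simpa only [Fin.append_right, Fin.natAdd_inj] using @hb i j)]
  simpa only [Fin.append_left, Fin.append_right] using hab i j

end Extension

section Collisions

variable {ι α : Type*} [Fintype ι]

lemma card_filter_piFinset_apply_eq_apply_le [DecidableEq ι] (s : Finset α) {i j : ι}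
    (hij : i ≠ j) :
    #{x ∈ Fintype.piFinset fun _ : ι => s | x i = x j} ≤ #s ^ (Fintype.card ι - 1) := by
  rcases s.eq_empty_or_nonempty with rfl | ⟨a, ha⟩
  · have : Nonempty ι := ⟨i⟩
    simp
  -- a tuple with `x i = x j` is determined by its values off `i`
  calc #{x ∈ Fintype.piFinset fun _ : ι => s | x i = x j}
      ≤ #{y ∈ Fintype.piFinset fun _ : ι => s | y i = a} := by
        refine card_le_card_of_injOn (update · i a) (fun x hx => ?_) fun x hx x' hx' h => ?_
        · simp only [coe_filter, Fintype.mem_piFinset, Set.mem_ofPred_eq] at hx ⊢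
          exact ⟨fun k => by rcases eq_or_ne k i with rfl | hk <;> simp [*, hx.1 k], update_self ..⟩
        · simp only [coe_filter, Set.mem_ofPred_eq] at hx hx'
          have hj := congrFun h j
          simp only [update_of_ne hij.symm] at hj
          funext k
          rcases eq_or_ne k i with rfl | hk
          · rw [hx.2, hx'.2, hj]
          · simpa [update_of_ne hk] using congrFun h k
    _ = #s ^ (Fintype.card ι - 1) := Fintype.card_filter_piFinset_const_eq_of_mem s i ha

lemma card_filter_piFinset_not_injective_le [LinearOrder ι] (s : Finset α) :
    #{x ∈ Fintype.piFinset fun _ : ι => s | ¬ Injective x} ≤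
      (Fintype.card ι).choose 2 * #s ^ (Fintype.card ι - 1) := by
  calc #{x ∈ Fintype.piFinset fun _ : ι => s | ¬ Injective x}
      ≤ #(({p : ι × ι | p.1 < p.2} : Finset _).biUnion fun p =>
          {x ∈ Fintype.piFinset fun _ : ι => s | x p.1 = x p.2}) := by
        refine card_le_card fun x hx => ?_
        simp only [mem_filter, Injective, not_forall] at hx
        obtain ⟨hx, k, l, hkl, hne⟩ := hx
        rcases lt_or_gt_of_ne hne with h | h
        · exact mem_biUnion.2 ⟨(k, l), by simpa using h, mem_filter.2 ⟨hx, hkl⟩⟩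
        · exact mem_biUnion.2 ⟨(l, k), by simpa using h, mem_filter.2 ⟨hx, hkl.symm⟩⟩
    _ ≤ (Fintype.card ι).choose 2 * #s ^ (Fintype.card ι - 1) := by
        rw [← Fintype.card_product_filter_lt]
        exact card_biUnion_le_card_mul _ _ _ fun p hp =>
          card_filter_piFinset_apply_eq_apply_le s (mem_filter.1 hp).2.ne

end Collisions

lemma sum_Ico_emod_add {M : Type*} [AddCommMonoid M] (n : ℕ) (c : ℤ) (g : ℤ → M) :
    ∑ z ∈ Ico 0 (n : ℤ), g ((c + z) % n) = ∑ z ∈ Ico 0 (n : ℤ), g z := by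
  rcases Nat.eq_zero_or_pos n with rfl | hn
  · simp
  have hmem : ∀ w : ℤ, w % n ∈ Ico 0 (n : ℤ) := fun w =>
    mem_Ico.2 ⟨Int.emod_nonneg _ (by omega), Int.emod_lt_of_pos _ (by omega)⟩
  refine sum_nbij' (fun z => (c + z) % n) (fun w => (w - c) % n) (fun z _ => hmem _)
    (fun w _ => hmem _) (fun z hz => ?_) (fun w hw => ?_) fun _ _ => rfl
  · rw [mem_Ico] at hz
    rw [Int.sub_emod, Int.emod_emod_of_dvd _ dvd_rfl, ← Int.sub_emod, add_sub_cancel_left,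
      Int.emod_eq_of_lt hz.1 hz.2]
  · rw [mem_Ico] at hw
    rw [Int.add_emod_emod, add_sub_cancel, Int.emod_eq_of_lt hw.1 hw.2]

def cube (t q : ℕ) : Finset (Fin t → ℤ) := Fintype.piFinset fun _ => Ico 0 (q : ℤ)

def shiftMod {t : ℕ} (q : ℕ) (x : Fin t → ℤ) (z : ℤ) : Fin t → ℤ := fun j => (x j + z) % q

lemma card_cube (t q : ℕ) : #(cube t q) = q ^ t := by
  simp [cube]

lemma sum_cube_extPred_singleton_comp (t q : ℕ) (e : ℤ → ℤ) (σ : Equiv.Perm (Fin t)) :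
    ∑ x ∈ cube t q, extPred {σ} (e ∘ x) = (q : ℝ) ^ t / t.factorial := by
  have hperm : ∀ τ : Equiv.Perm (Fin t), ∀ x ∈ cube t q, x ∘ τ ∈ cube t q := fun τ x hx => by
    simp only [cube, Fintype.mem_piFinset] at hx ⊢
    exact fun i => hx (τ i)
  rw [sum_extPred_singleton_comp hperm e σ, card_cube, Nat.cast_pow]

section Distribution

variable {t q1 q2 : ℕ}

lemma dSO_shiftMod {x : Fin t → ℤ} {z : ℤ} (hx : x ∈ cube t q1) (hz : z ∈ Ico 0 (q2 : ℤ)) :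
    dSO t q1 q2 (x, shiftMod q2 x z) = 1 / ((q1 : ℝ) ^ t * q2) := by
  simp only [cube, Fintype.mem_piFinset, mem_Ico] at hx hz
  exact if_pos ⟨hx, z, hz.1, hz.2, fun _ => rfl⟩

lemma support_dSO_subset :
    support (dSO t q1 q2) ⊆
      image (fun xz : (Fin t → ℤ) × ℤ => (xz.1, shiftMod q2 xz.1 xz.2))
        (cube t q1 ×ˢ Ico 0 (q2 : ℤ)) := by
  intro p hp
  rw [mem_support, dSO] at hp
  split_ifs at hp with h
  · obtain ⟨hx, z, hz0, hz, hy⟩ := h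
    refine mem_image.2 ⟨(p.1, z), ?_, Prod.ext rfl (funext fun j => (hy j).symm)⟩
    simpa [cube, hz0, hz] using hx
  · exact absurd rfl hp

lemma injOn_shiftMod (ht : 1 ≤ t) :
    Set.InjOn (fun xz : (Fin t → ℤ) × ℤ => (xz.1, shiftMod q2 xz.1 xz.2))
      ↑(cube t q1 ×ˢ Ico 0 (q2 : ℤ)) := by
  rintro ⟨x, z⟩ hxz ⟨x', z'⟩ hxz' h
  simp only [coe_product, Set.mem_prod, mem_coe, mem_Ico, Prod.mk.injEq] at hxz hxz' h
  obtain ⟨rfl, hy⟩ := h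
  have hmod : z % q2 = z' % q2 :=
    Int.ModEq.add_left_cancel' (x ⟨0, ht⟩) (congrFun hy ⟨0, ht⟩)
  rw [Int.emod_eq_of_lt hxz.2.1 hxz.2.2, Int.emod_eq_of_lt hxz'.2.1 hxz'.2.2] at hmod
  rw [hmod]

lemma finsum_dSO_mul (ht : 1 ≤ t) (f : (Fin t → ℤ) × (Fin t → ℤ) → ℝ) :
    ∑ᶠ p, dSO t q1 q2 p * f p =
      ((q1 : ℝ) ^ t * q2)⁻¹ * ∑ x ∈ cube t q1, ∑ z ∈ Ico 0 (q2 : ℤ), f (x, shiftMod q2 x z) := by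
  rw [finsum_eq_sum_of_support_subset _ ((support_mul_subset_left _ _).trans support_dSO_subset),
    sum_image (injOn_shiftMod ht), sum_product, mul_sum]
  refine sum_congr rfl fun x hx => ?_
  rw [mul_sum]
  refine sum_congr rfl fun z hz => ?_
  rw [dSO_shiftMod hx hz, one_div]

lemma finsum_ite_dSO (P : (Fin t → ℤ) × (Fin t → ℤ) → Prop) [DecidablePred P] :
    ∑ᶠ p, (if P p then dSO t q1 q2 p else 0) = ∑ᶠ p, dSO t q1 q2 p * if P p then 1 else 0 :=
  finsum_congr fun _ => (mul_boole _ _).symm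

lemma finsum_dSO_mul_fst_mul_snd (ht : 1 ≤ t) (f : (Fin t → ℤ) → ℝ) (j : Fin t) (g : ℤ → ℝ) :
    ∑ᶠ p, dSO t q1 q2 p * (f p.1 * g (p.2 j)) =
      (((q1 : ℝ) ^ t)⁻¹ * ∑ x ∈ cube t q1, f x) * ((q2 : ℝ)⁻¹ * ∑ z ∈ Ico 0 (q2 : ℤ), g z) := by
  simp only [finsum_dSO_mul ht, shiftMod, ← mul_sum, sum_Ico_emod_add, ← sum_mul]
  ring

lemma finsum_dSO_mul_fst (ht : 1 ≤ t) (hq2 : q2 ≠ 0) (f : (Fin t → ℤ) → ℝ) :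
    ∑ᶠ p, dSO t q1 q2 p * f p.1 = ((q1 : ℝ) ^ t)⁻¹ * ∑ x ∈ cube t q1, f x := by
  simpa [hq2] using finsum_dSO_mul_fst_mul_snd (q2 := q2) ht f ⟨0, ht⟩ 1

lemma finsum_dSO_mul_snd (ht : 1 ≤ t) (hq1 : q1 ≠ 0) (j : Fin t) (g : ℤ → ℝ) :
    ∑ᶠ p, dSO t q1 q2 p * g (p.2 j) = (q2 : ℝ)⁻¹ * ∑ z ∈ Ico 0 (q2 : ℤ), g z := by
  simpa [hq1, card_cube] using finsum_dSO_mul_fst_mul_snd (q1 := q1) ht 1 j g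

lemma finsum_ite_dSO_fst_apply_eq (ht : 1 ≤ t) (hq2 : q2 ≠ 0) (i : Fin t) (a : ℤ) :
    (∑ᶠ p, if p.1 i = a then dSO t q1 q2 p else 0) =
      if 0 ≤ a ∧ a < (q1 : ℤ) then 1 / (q1 : ℝ) else 0 := by
  rw [finsum_ite_dSO, finsum_dSO_mul_fst ht hq2 fun x => if x i = a then 1 else 0, sum_boole,
    cube, Fintype.card_filter_piFinset_const]
  simp only [mem_Ico, Int.card_Ico, sub_zero, Int.toNat_natCast, Fintype.card_fin]
  split_ifs with ha
  · have hq1 : (q1 : ℝ) ≠ 0 := by exact_mod_cast (show q1 ≠ 0 by omega)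
    rw [← Nat.sub_add_cancel ht, Nat.add_sub_cancel, pow_succ]
    push_cast
    field_simp
  · simp

lemma finsum_ite_dSO_snd_apply_eq (ht : 1 ≤ t) (hq1 : q1 ≠ 0) (j : Fin t) (b : ℤ) :
    (∑ᶠ p, if p.2 j = b then dSO t q1 q2 p else 0) =
      if 0 ≤ b ∧ b < (q2 : ℤ) then 1 / (q2 : ℝ) else 0 := by
  rw [finsum_ite_dSO, finsum_dSO_mul_snd ht hq1 j fun z => if z = b then 1 else 0, sum_ite_eq']
  simp only [mem_Ico]
  split_ifs <;> simp

lemma finsum_dSO_mul_extPred_singleton_fst (ht : 1 ≤ t) (hq1 : q1 ≠ 0) (hq2 : q2 ≠ 0)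
    (σ : Equiv.Perm (Fin t)) :
    ∑ᶠ p, dSO t q1 q2 p * extPred {σ} p.1 = 1 / (t.factorial : ℝ) := by
  have hx : ∑ x ∈ cube t q1, extPred {σ} x = (q1 : ℝ) ^ t / t.factorial :=
    sum_cube_extPred_singleton_comp t q1 id σ
  rw [finsum_dSO_mul_fst ht hq2, hx]
  field_simp

lemma finsum_dSO_mul_extPred_singleton_snd (ht : 1 ≤ t) (hq1 : q1 ≠ 0) (hq2 : q2 ≠ 0)
    (σ : Equiv.Perm (Fin t)) :
    ∑ᶠ p, dSO t q1 q2 p * extPred {σ} p.2 = 1 / (t.factorial : ℝ) := by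
  have hy : ∀ z : ℤ, ∑ x ∈ cube t q1, extPred {σ} (x, shiftMod q2 x z).2 =
      (q1 : ℝ) ^ t / t.factorial :=
    fun z => sum_cube_extPred_singleton_comp t q1 (fun v => (v + z) % q2) σ
  rw [finsum_dSO_mul ht, sum_comm, sum_congr rfl fun z _ => hy z, sum_const, Int.card_Ico,
    sub_zero, Int.toNat_natCast, nsmul_eq_mul]
  field_simp

end Distribution

section SameOrder

variable {t q1 q2 : ℕ}

lemma one_sub_le_card_filter_injective_div (ht : 1 ≤ t) (hq : q1 ≠ 0) :
    1 - (t : ℝ) ^ 2 / (2 * q1) ≤ #{x ∈ cube t q1 | Injective x} / (q1 : ℝ) ^ t := by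
  have hcoll : #{x ∈ cube t q1 | ¬ Injective x} ≤ t.choose 2 * q1 ^ (t - 1) := by
    convert card_filter_piFinset_not_injective_le (ι := Fin t) (Ico 0 (q1 : ℤ)) using 3
    · unfold cube; congr!
    all_goals simp
  have hsplit : #{x ∈ cube t q1 | Injective x} + #{x ∈ cube t q1 | ¬ Injective x} = q1 ^ t :=
    (card_filter_add_card_filter_not _).trans (card_cube t q1)
  have hchoose : (t.choose 2 : ℝ) ≤ t ^ 2 / 2 := by
    simpa using Nat.choose_le_pow_div (α := ℝ) 2 t
  have hq1 : (0 : ℝ) < q1 := by positivity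
  have hpow : (q1 : ℝ) ^ t = q1 ^ (t - 1) * q1 := by rw [← pow_succ, Nat.sub_add_cancel ht]
  have hbound : (t : ℝ) ^ 2 / (2 * q1) * (q1 ^ (t - 1) * q1) = t ^ 2 / 2 * q1 ^ (t - 1) := by
    field_simp
  rw [le_div_iff₀ (by positivity), hpow, sub_mul, one_mul, hbound]
  have hsplit' : (#{x ∈ cube t q1 | Injective x} : ℝ) + #{x ∈ cube t q1 | ¬ Injective x} =
      q1 ^ (t - 1) * q1 := by
    rw [← hpow]; exact_mod_cast hsplit
  have hcoll' : (#{x ∈ cube t q1 | ¬ Injective x} : ℝ) ≤ t.choose 2 * q1 ^ (t - 1) := by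
    exact_mod_cast hcoll
  linarith [mul_le_mul_of_nonneg_right hchoose (pow_nonneg hq1.le (t - 1))]

lemma extPred_soPred_shiftMod {x : Fin t → ℤ} {z : ℤ} (hx : x ∈ cube t q1) (hinj : Injective x)
    (hz : z ∈ Ico 0 (q2 - q1 : ℤ)) : extPred (soPred t) (Fin.append x (shiftMod q2 x z)) = 1 := by
  simp only [cube, Fintype.mem_piFinset, mem_Ico] at hx hz
  have hnowrap : shiftMod q2 x z = fun j => x j + z :=
    funext fun j => Int.emod_eq_of_lt (by linarith [hx j]) (by linarith [hx j])
  rw [hnowrap]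
  exact extPred_soPred_append hinj fun i j => (add_lt_add_iff_right z).symm

lemma card_mul_le_finsum_dSO_mul_extPred_soPred (ht : 1 ≤ t) (hq12 : q1 ≤ q2) :
    #{x ∈ cube t q1 | Injective x} / (q1 : ℝ) ^ t * ((q2 - q1) / q2) ≤
      ∑ᶠ p, dSO t q1 q2 p * extPred (soPred t) (Fin.append p.1 p.2) := by
  have hwidth : (#(Ico 0 (q2 - q1 : ℤ)) : ℝ) = q2 - q1 := by
    rw [Int.card_Ico, sub_zero, ← Nat.cast_sub hq12, Int.toNat_natCast, Nat.cast_sub hq12]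
  have hsub : Ico 0 (q2 - q1 : ℤ) ⊆ Ico 0 (q2 : ℤ) := Ico_subset_Ico le_rfl (by omega)
  rw [finsum_dSO_mul ht]
  calc #{x ∈ cube t q1 | Injective x} / (q1 : ℝ) ^ t * ((q2 - q1) / q2)
      = ((q1 : ℝ) ^ t * q2)⁻¹ * ∑ x ∈ cube t q1 with Injective x, ∑ z ∈ Ico 0 (q2 - q1 : ℤ),
          extPred (soPred t) (Fin.append x (shiftMod q2 x z)) := by
        rw [sum_congr rfl fun x hx => sum_congr rfl fun z hz =>
          extPred_soPred_shiftMod (mem_filter.1 hx).1 (mem_filter.1 hx).2 hz]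
        simp only [sum_const, nsmul_eq_mul, mul_one, hwidth]
        ring
    _ ≤ ((q1 : ℝ) ^ t * q2)⁻¹ * ∑ x ∈ cube t q1, ∑ z ∈ Ico 0 (q2 : ℤ),
          extPred (soPred t) (Fin.append x (shiftMod q2 x z)) := by
        refine mul_le_mul_of_nonneg_left ?_ (by positivity)
        refine (sum_le_sum fun x _ => sum_le_sum_of_subset_of_nonneg hsub
          fun _ _ _ => extPred_nonneg _ _).trans ?_
        exact sum_le_sum_of_subset_of_nonneg (filter_subset _ _)
          fun _ _ _ => sum_nonneg fun _ _ => extPred_nonneg _ _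

lemma one_sub_sub_le_finsum_dSO_mul_extPred_soPred (ht : 1 ≤ t) (hq1 : q1 ≠ 0) (hq12 : q1 < q2) :
    1 - (t : ℝ) ^ 2 / (2 * q1) - q1 / q2 ≤
      ∑ᶠ p, dSO t q1 q2 p * extPred (soPred t) (Fin.append p.1 p.2) := by
  have hq2 : (0 : ℝ) < q2 := by exact_mod_cast (show 0 < q2 by omega)
  have hwrap : (q2 - q1 : ℝ) / q2 = 1 - q1 / q2 := by field_simp
  have hb : (q1 : ℝ) / q2 ≤ 1 := (div_le_one hq2).2 (by exact_mod_cast hq12.le)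
  have ha : 0 ≤ (t : ℝ) ^ 2 / (2 * q1) := by positivity
  have hb' : 0 ≤ (q1 : ℝ) / q2 := by positivity
  calc 1 - (t : ℝ) ^ 2 / (2 * q1) - q1 / q2 ≤ (1 - (t : ℝ) ^ 2 / (2 * q1)) * (1 - q1 / q2) := by
        nlinarith [mul_nonneg ha hb']
    _ ≤ #{x ∈ cube t q1 | Injective x} / (q1 : ℝ) ^ t * ((q2 - q1) / q2) := by
        rw [hwrap]
        exact mul_le_mul_of_nonneg_right (one_sub_le_card_filter_injective_div ht hq1)
          (by linarith)
    _ ≤ _ := card_mul_le_finsum_dSO_mul_extPred_soPred ht hq12.le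

end SameOrder

/-- properties of the base distribution `D_SO`.
(1) each `x_i` is uniform on `[q₁]` and each `y_j` is uniform on `[q₂]`;
(2) each `y_j` is independent of the joint vector `x`;
(3) each of the two halves has a uniformly random relative order: `E[1_σ] = 1/t!`;
(4) `E[SO_{2t}(x, y)] ≥ 1 - t²/(2q₁) - q₁/q₂`. -/
theorem dSO_properties (t q1 q2 : ℕ) (ht : 1 ≤ t) (hq1 : 2 ≤ q1) (hq12 : q1 < q2) :
    (∀ (i : Fin t) (a : ℤ),
      (∑ᶠ p : (Fin t → ℤ) × (Fin t → ℤ), if p.1 i = a then dSO t q1 q2 p else 0)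
        = if 0 ≤ a ∧ a < (q1 : ℤ) then 1 / (q1 : ℝ) else 0) ∧
    (∀ (j : Fin t) (b : ℤ),
      (∑ᶠ p : (Fin t → ℤ) × (Fin t → ℤ), if p.2 j = b then dSO t q1 q2 p else 0)
        = if 0 ≤ b ∧ b < (q2 : ℤ) then 1 / (q2 : ℝ) else 0) ∧
    (∀ (j : Fin t) (x0 : Fin t → ℤ) (b : ℤ),
      (∑ᶠ p : (Fin t → ℤ) × (Fin t → ℤ), if p.1 = x0 ∧ p.2 j = b then dSO t q1 q2 p else 0)
        = (∑ᶠ p : (Fin t → ℤ) × (Fin t → ℤ), if p.1 = x0 then dSO t q1 q2 p else 0) *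
          (∑ᶠ p : (Fin t → ℤ) × (Fin t → ℤ), if p.2 j = b then dSO t q1 q2 p else 0)) ∧
    (∀ σ : Equiv.Perm (Fin t),
      (∑ᶠ p : (Fin t → ℤ) × (Fin t → ℤ), dSO t q1 q2 p * extPred {σ} p.1)
        = 1 / (t.factorial : ℝ)) ∧
    (∀ σ : Equiv.Perm (Fin t),
      (∑ᶠ p : (Fin t → ℤ) × (Fin t → ℤ), dSO t q1 q2 p * extPred {σ} p.2)
        = 1 / (t.factorial : ℝ)) ∧
    (∑ᶠ p : (Fin t → ℤ) × (Fin t → ℤ),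
        dSO t q1 q2 p * extPred (soPred t) (Fin.append p.1 p.2))
      ≥ 1 - (t : ℝ) ^ 2 / (2 * q1) - (q1 : ℝ) / q2 := by
  have hq1₀ : q1 ≠ 0 := by omega
  have hq2₀ : q2 ≠ 0 := by omega
  refine ⟨finsum_ite_dSO_fst_apply_eq ht hq2₀, finsum_ite_dSO_snd_apply_eq ht hq1₀,
    fun j x0 b => ?_, finsum_dSO_mul_extPred_singleton_fst ht hq1₀ hq2₀,
    finsum_dSO_mul_extPred_singleton_snd ht hq1₀ hq2₀,
    one_sub_sub_le_finsum_dSO_mul_extPred_soPred ht hq1₀ hq12⟩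
  simp only [finsum_ite_dSO]
  rw [finsum_dSO_mul_fst ht hq2₀ fun x => if x = x0 then 1 else 0,
    finsum_dSO_mul_snd ht hq1₀ j fun z => if z = b then 1 else 0,
    ← finsum_dSO_mul_fst_mul_snd ht]
  exact finsum_congr fun p => by rw [ite_zero_mul_ite_zero, mul_one]

end OCSPPaper
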